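/- arXiv:2108.02802 — 4 statements merged into one kernel-verified Lean document; each statement's English description precedes it below -/
import Mathlib

section
/- Let n ≥ 2 and suppose a process starts with a finite set V_0 of n elements, and at each step t removes the element j_t of V_t minimizing a counter β_t, and increments the counter of at least one remaining element by 1 (counters start at 0). Then when only one element ℓ remains, its counter satisfies β(ℓ) ≥ log_2 n. -/
theorem stmt_4 {α : Type*} [DecidableEq α] (n : ℕ) (hn : 2 ≤ n)
    (V : ℕ → Finset α) (β : ℕ → α → ℕ)
    (hV0 : (V 0).card = n) (hβ0 : ∀ v, β 0 v = 0)
    (hstep : ∀ t < n - 1, ∃ j ∈ V t,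
      (∀ v ∈ V t, β t j ≤ β t v) ∧
      V (t + 1) = (V t).erase j ∧
      (∀ v ∈ V (t + 1), β (t + 1) v = β t v ∨ β (t + 1) v = β t v + 1) ∧
      (∃ i ∈ V (t + 1), β (t + 1) i = β t i + 1))
    (ℓ : α) (hℓ : V (n - 1) = {ℓ}) :
    (β (n - 1) ℓ : ℝ) ≥ Real.logb 2 n := by
  -- invariant
  have inv : ∀ t ≤ n - 1, n ≤ ∑ v ∈ V t, 2 ^ (β t v) := by
    intro t ht
    induction t with
    | zero =>
      have : ∑ v ∈ V 0, 2 ^ (β 0 v) = (V 0).card := by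
        rw [Finset.card_eq_sum_ones]
        exact Finset.sum_congr rfl (fun v _ => by rw [hβ0 v]; rfl)
      omega
    | succ t ih =>
      have ht' : t < n - 1 := by omega
      have iht := ih (by omega)
      obtain ⟨j, hjV, hjmin, hVe, hmono, i, hiV, hinc⟩ := hstep t ht'
      have hiVt : i ∈ V t := by rw [hVe] at hiV; exact Finset.mem_of_mem_erase hiV
      have hg : ∀ v ∈ V (t+1), (2:ℕ) ^ (β t v) ≤ 2 ^ (β (t+1) v) := by
        intro v hv
        rcases hmono v hv with h | h <;> rw [h] <;>
          exact Nat.pow_le_pow_right (by norm_num) (by omega)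
      have hsum1 : ∑ v ∈ V (t+1), 2 ^ (β t v) + 2 ^ (β t j)
          = ∑ v ∈ V t, 2 ^ (β t v) := by
        rw [hVe]; exact Finset.sum_erase_add _ _ hjV
      -- split out i
      have hi_split : ∑ v ∈ V (t+1), 2 ^ (β (t+1) v)
          = ∑ v ∈ (V (t+1)).erase i, 2 ^ (β (t+1) v) + 2 ^ (β (t+1) i) :=
        (Finset.sum_erase_add _ _ hiV).symm
      have hi_split' : ∑ v ∈ V (t+1), 2 ^ (β t v)
          = ∑ v ∈ (V (t+1)).erase i, 2 ^ (β t v) + 2 ^ (β t i) :=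
        (Finset.sum_erase_add _ _ hiV).symm
      have hsum_erase : ∑ v ∈ (V (t+1)).erase i, 2 ^ (β t v)
          ≤ ∑ v ∈ (V (t+1)).erase i, 2 ^ (β (t+1) v) :=
        Finset.sum_le_sum (fun v hv => hg v (Finset.mem_of_mem_erase hv))
      have hji : (2:ℕ) ^ (β t j) ≤ 2 ^ (β t i) :=
        Nat.pow_le_pow_right (by norm_num) (hjmin i hiVt)
      have : ∑ v ∈ V t, 2 ^ (β t v) ≤ ∑ v ∈ V (t+1), 2 ^ (β (t+1) v) := by
        rw [hi_split, ← hsum1, hi_split', hinc, pow_succ]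
        omega
      omega
  have hfinal := inv (n - 1) le_rfl
  rw [hℓ, Finset.sum_singleton] at hfinal
  have h2 : (n : ℝ) ≤ 2 ^ (β (n-1) ℓ) := by exact_mod_cast hfinal
  have hn0 : (0:ℝ) < n := by positivity
  calc Real.logb 2 n ≤ Real.logb 2 (2 ^ (β (n-1) ℓ)) :=
        Real.logb_le_logb_of_le (by norm_num) hn0 h2
    _ = β (n-1) ℓ := by
        rw [Real.logb_pow, Real.logb_self_eq_one (by norm_num), mul_one]
end

section
/- Let e be a finite sequence of registers u_1, ..., u_k and ρ : registers → ℝ≥0 with Σ_{j=1}^{k} ρ(u_j) ≥ n − 1 for a natural number n ≥ 1. Then Σ_{i=1}^{k} ρ(u_i)/(1 + Σ_{j=1}^{i-1} ρ(u_j)) ≥ ln n. -/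
theorem stmt_9 {R : Type*} (k : ℕ) (u : ℕ → R) (ρ : R → ℝ) (hρ : ∀ r, 0 ≤ ρ r)
    (n : ℕ) (hn : 1 ≤ n)
    (hsum : ∑ j ∈ Finset.range k, ρ (u j) ≥ (n : ℝ) - 1) :
    ∑ i ∈ Finset.range k, ρ (u i) / (1 + ∑ j ∈ Finset.range i, ρ (u j)) ≥ Real.log n := by
  set S : ℕ → ℝ := fun m => ∑ j ∈ Finset.range m, ρ (u j) with hS
  have hSnn : ∀ m, 0 ≤ S m := fun m => Finset.sum_nonneg fun j _ => hρ _
  have key : ∀ m, Real.log (1 + S m) ≤ ∑ i ∈ Finset.range m, ρ (u i) / (1 + S i) := by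
    intro m
    induction m with
    | zero => simp [hS]
    | succ m ih =>
      have hpos : (0:ℝ) < 1 + S m := by linarith [hSnn m]
      have hx : 0 ≤ ρ (u m) := hρ _
      have hpos2 : (0:ℝ) < 1 + S m + ρ (u m) := by linarith
      have hSsucc : S (m+1) = S m + ρ (u m) := Finset.sum_range_succ _ _
      have hlog : Real.log (1 + S (m+1)) - Real.log (1 + S m) ≤ ρ (u m) / (1 + S m) := by
        rw [hSsucc, ← Real.log_div (by linarith) (by linarith)]
        have := Real.log_le_sub_one_of_pos (x := (1 + S m + ρ (u m)) / (1 + S m))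
          (by positivity)
        calc Real.log ((1 + (S m + ρ (u m))) / (1 + S m))
            ≤ (1 + S m + ρ (u m)) / (1 + S m) - 1 := by
              rw [show 1 + (S m + ρ (u m)) = 1 + S m + ρ (u m) by ring]; exact this
          _ = ρ (u m) / (1 + S m) := by field_simp; ring
      rw [Finset.sum_range_succ]
      linarith
  have h1 : Real.log n ≤ Real.log (1 + S k) := by
    apply Real.log_le_log (by exact_mod_cast Nat.cast_pos.mpr hn)
    linarith [hsum]
  linarith [key k]
end

section
/- Let E be a countable set with nonnegative summable weights Pr and d : E → ℝ≥0. Suppose there is a function m assigning to each subset F ⊆ E a natural number m(F) ≤ κ (for fixed κ ≥ 1) with: m(F) = 0 implies F = ∅, and for every F there is H(F) ⊆ F with Σ_{e ∈ H(F)} Pr[e]/(1 + d(e)) ≤ m(F) and m(F \ H(F)) < m(F). Then Σ_{e ∈ E} Pr[e]/(1 + d(e)) ≤ κ². -/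
theorem stmt_13 {E : Type*} [Countable E]
    (Pr : E → ℝ) (hPr : ∀ e, 0 ≤ Pr e) (hsummable : Summable Pr)
    (d : E → ℝ) (hd : ∀ e, 0 ≤ d e)
    (κ : ℕ) (hκ : 1 ≤ κ)
    (m : Set E → ℕ) (hmκ : ∀ F : Set E, m F ≤ κ)
    (hm0 : ∀ F : Set E, m F = 0 → F = ∅)
    (hstep : ∀ F : Set E, F ≠ ∅ → ∃ H ⊆ F,
      (∑' e : H, Pr e.val / (1 + d e.val)) ≤ (m F : ℝ) ∧ m (F \ H) < m F) :
    ∑' e : E, Pr e / (1 + d e) ≤ (κ : ℝ) ^ 2 := by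
  set f : E → ℝ := fun e => Pr e / (1 + d e) with hf
  have hf0 : ∀ e, 0 ≤ f e := fun e =>
    div_nonneg (hPr e) (by linarith [hd e])
  have hfle : ∀ e, f e ≤ Pr e := fun e =>
    div_le_self (hPr e) (by linarith [hd e])
  have hfs : Summable f := hsummable.of_nonneg_of_le hf0 hfle
  have key : ∀ n : ℕ, ∀ F : Set E, m F ≤ n →
      (∑' e : F, f e.val) ≤ (κ : ℝ) * m F := by
    intro n
    induction n with
    | zero =>
      intro F hF
      have : F = ∅ := hm0 F (Nat.le_zero.mp hF)
      subst this
      simp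
      positivity
    | succ n ih =>
      intro F hF
      by_cases hFe : F = ∅
      · subst hFe
        simp
        positivity
      · obtain ⟨H, hHF, hHsum, hHlt⟩ := hstep F hFe
        have hm1 : 1 ≤ m F := Nat.one_le_iff_ne_zero.mpr (fun h => hFe (hm0 F h))
        have hsplit : (∑' e : F, f e.val) =
            (∑' e : H, f e.val) + (∑' e : (F \ H : Set E), f e.val) := by
          have h := Summable.tsum_union_disjoint (f := f) (s := H) (t := F \ H)
            Set.disjoint_sdiff_right (hfs.subtype _) (hfs.subtype _)
          rwa [Set.union_diff_cancel hHF] at h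
        rw [hsplit]
        have h1 : (∑' e : (F \ H : Set E), f e.val) ≤ (κ : ℝ) * m (F \ H) :=
          ih _ (by omega)
        have h2 : (m (F \ H) : ℝ) ≤ (m F : ℝ) - 1 := by
          have h : (m (F \ H) : ℝ) + 1 ≤ (m F : ℝ) := by exact_mod_cast hHlt
          linarith
        have hκR : (m F : ℝ) ≤ κ := by exact_mod_cast hmκ F
        have hκ0 : (0 : ℝ) ≤ κ := by positivity
        calc (∑' e : H, f e.val) + (∑' e : (F \ H : Set E), f e.val)
            ≤ (m F : ℝ) + (κ : ℝ) * m (F \ H) := add_le_add hHsum h1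
          _ ≤ (κ : ℝ) + (κ : ℝ) * ((m F : ℝ) - 1) := by
              have := mul_le_mul_of_nonneg_left h2 hκ0
              linarith
          _ = (κ : ℝ) * m F := by ring
  have huniv : (∑' e : E, f e) = ∑' e : (Set.univ : Set E), f e.val :=
    (tsum_univ f).symm
  calc ∑' e : E, f e = ∑' e : (Set.univ : Set E), f e.val := huniv
    _ ≤ (κ : ℝ) * m Set.univ := key (m Set.univ) Set.univ le_rfl
    _ ≤ (κ : ℝ) * κ := by
        have : (m Set.univ : ℝ) ≤ κ := by exact_mod_cast hmκ _
        nlinarith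
    _ = (κ : ℝ) ^ 2 := by ring
end

section
/- For positive reals x_1, ..., x_m with Σ x_i ≥ n − 1 (n ≥ 1 a natural number), and any nonnegative reals c_1, ..., c_m with c_i ≤ Σ_{j=1}^{i-1} x_j for each i, we have Σ_{i=1}^m x_i/(1 + c_i) ≥ ln n. -/
theorem stmt_16 (m : ℕ) (x : ℕ → ℝ) (hx : ∀ i < m, 0 < x i)
    (n : ℕ) (hn : 1 ≤ n) (hsum : ∑ i ∈ Finset.range m, x i ≥ (n : ℝ) - 1)
    (c : ℕ → ℝ) (hc0 : ∀ i < m, 0 ≤ c i)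
    (hc : ∀ i < m, c i ≤ ∑ j ∈ Finset.range i, x j) :
    ∑ i ∈ Finset.range m, x i / (1 + c i) ≥ Real.log n := by
  set S : ℕ → ℝ := fun i => ∑ j ∈ Finset.range i, x j with hS
  have hSnn : ∀ i ≤ m, 0 ≤ S i := by
    intro i hi
    apply Finset.sum_nonneg
    intro j hj
    exact (hx j (lt_of_lt_of_le (Finset.mem_range.mp hj) hi)).le
  have key : ∀ i < m, Real.log (1 + S (i+1)) - Real.log (1 + S i) ≤ x i / (1 + c i) := by
    intro i hi
    have hSi : 0 ≤ S i := hSnn i hi.le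
    have h1 : (0:ℝ) < 1 + S i := by linarith
    have h2 : (0:ℝ) < 1 + S (i+1) := by
      have := hSnn (i+1) hi
      linarith
    have hci : 0 ≤ c i := hc0 i hi
    have hcle : c i ≤ S i := hc i hi
    have hxi := hx i hi
    have hSsucc : S (i+1) = S i + x i := Finset.sum_range_succ x i
    rw [← Real.log_div h2.ne' h1.ne']
    have hlog : Real.log ((1 + S (i+1)) / (1 + S i)) ≤ (1 + S (i+1)) / (1 + S i) - 1 :=
      Real.log_le_sub_one_of_pos (div_pos h2 h1)
    have heq : (1 + S (i+1)) / (1 + S i) - 1 = x i / (1 + S i) := by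
      field_simp [hSsucc]
      linarith
    have hmono : x i / (1 + S i) ≤ x i / (1 + c i) := by
      apply div_le_div_of_nonneg_left hxi.le (by linarith) (by linarith)
    linarith
  have tele : ∑ i ∈ Finset.range m, (Real.log (1 + S (i+1)) - Real.log (1 + S i))
      = Real.log (1 + S m) - Real.log (1 + S 0) := by
    exact Finset.sum_range_sub (fun i => Real.log (1 + S i)) m
  have hS0 : S 0 = 0 := by simp [hS]
  have hsum2 : ∑ i ∈ Finset.range m, (Real.log (1 + S (i+1)) - Real.log (1 + S i))
      ≤ ∑ i ∈ Finset.range m, x i / (1 + c i) := by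
    apply Finset.sum_le_sum
    intro i hi
    exact key i (Finset.mem_range.mp hi)
  have hlogn : Real.log n ≤ Real.log (1 + S m) := by
    apply Real.log_le_log (by positivity)
    have : (n:ℝ) - 1 ≤ S m := hsum
    linarith
  rw [tele, hS0] at hsum2
  simp at hsum2
  linarith
end
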